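/- Let Σ and Γ be finite alphabets and h : Γ* → Σ* a weak coding homomorphism, i.e., |h(a)| ≤ 1 for every letter a ∈ Γ. If L ⊆ Σ* is a semilinear language, then h⁻¹(L) = {w ∈ Γ* : h(w) ∈ L} is a semilinear language over Γ. -/

import Mathlib

/-!
Write `h w = (w.map f).flatten` and `ψ = parikhWord`. For every homomorphism, `ψ (h w)` is the image
of `ψ w` under the linear map `parikhMap f : ℕ^Γ → ℕ^Σ`; for a weak coding moreover
`ψ (h⁻¹ L) = (parikhMap f)⁻¹ (ψ L)`. Indeed, if `h w₀` is a permutation of `u ∈ L`, each letter of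
`u` is the image of a single letter of `w₀`, so `w₀` can be rearranged letter by letter into a word
`w` with `h w = u` and `ψ w = ψ w₀`. Preimages of semilinear sets under additive maps out of `ℕ^Γ`
are semilinear (Ginsburg–Spanier; `IsSemilinearSet.preimage`).
-/

/-- A set `Q ⊆ ℕ^α` is linear if it has a constant vector `v₀` and finitely many
period vectors `v₁, …, v_l` with `Q = {v₀ + i₁v₁ + ⋯ + i_l v_l}`. -/
def IsLinearSetNat {α : Type*} (Q : Set (α → ℕ)) : Prop :=
  ∃ (v₀ : α → ℕ) (l : ℕ) (v : Fin l → α → ℕ),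
    Q = { x | ∃ c : Fin l → ℕ, x = v₀ + ∑ j, c j • v j }

/-- A set is semilinear if it is a finite union of linear sets. -/
def IsSemilinearSetNat {α : Type*} (Q : Set (α → ℕ)) : Prop :=
  ∃ (n : ℕ) (Qs : Fin n → Set (α → ℕ)),
    (∀ i, IsLinearSetNat (Qs i)) ∧ Q = ⋃ i, Qs i

open Classical in
/-- The Parikh image of a word: `parikhWord w a = |w|_a`. -/
noncomputable def parikhWord {σ : Type*} (w : List σ) : σ → ℕ :=
  fun a => w.count a

/-- A language is semilinear if its Parikh image is a semilinear set. -/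
def IsSemilinearLanguage {σ : Type*} (L : Set (List σ)) : Prop :=
  IsSemilinearSetNat (parikhWord '' L)

theorem isLinearSetNat_iff {α : Type*} {Q : Set (α → ℕ)} : IsLinearSetNat Q ↔ IsLinearSet Q := by
  rw [isLinearSet_iff_exists_fin_addMonoidHom]
  constructor
  · rintro ⟨v₀, l, v, rfl⟩
    refine ⟨v₀, l, (Fintype.linearCombination ℕ v).toAddMonoidHom, ?_⟩
    ext x
    simp [Set.mem_vadd_set, Fintype.linearCombination_apply, eq_comm]
  · rintro ⟨v₀, l, g, rfl⟩
    obtain ⟨v, hv⟩ : ∃ v : Fin l → α → ℕ, ∀ c, g c = ∑ j, c j • v j := by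
      refine ⟨fun j => g (Pi.single j 1), fun c => ?_⟩
      simp_rw [← map_nsmul, ← map_sum, ← Pi.single_smul', smul_eq_mul, mul_one,
        Finset.univ_sum_single]
    refine ⟨v₀, l, v, ?_⟩
    ext x
    simp [Set.mem_vadd_set, eq_comm, hv]

theorem isSemilinearSetNat_iff {α : Type*} {Q : Set (α → ℕ)} :
    IsSemilinearSetNat Q ↔ IsSemilinearSet Q := by
  constructor
  · rintro ⟨n, Qs, hQs, rfl⟩
    rw [← Set.sUnion_range]
    exact ⟨_, Set.finite_range Qs,
      Set.forall_mem_range.mpr fun i => isLinearSetNat_iff.mp (hQs i), rfl⟩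
  · rintro ⟨S, hS, hlin, rfl⟩
    obtain ⟨n, Qs, rfl⟩ := hS.fin_embedding
    exact ⟨n, Qs, fun i => isLinearSetNat_iff.mpr (hlin _ ⟨i, rfl⟩), Set.sUnion_range Qs⟩

section Parikh

variable {σ γ : Type*}

theorem parikhWord_apply [DecidableEq σ] (w : List σ) (a : σ) :
    parikhWord w a = w.count a := by
  unfold parikhWord
  congr
  exact Subsingleton.elim _ _

theorem parikhWord_nil : parikhWord ([] : List σ) = 0 := by
  funext a
  simp [parikhWord]

theorem parikhWord_append (u v : List σ) :
    parikhWord (u ++ v) = parikhWord u + parikhWord v := by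
  funext a
  simp [parikhWord]

theorem parikhWord_singleton [DecidableEq σ] (a : σ) :
    parikhWord [a] = Pi.single a 1 := by
  funext b
  simp [parikhWord_apply, Pi.single_apply, List.count_singleton, eq_comm (a := b)]

theorem parikhWord_eq_parikhWord_iff_perm {u v : List σ} :
    parikhWord u = parikhWord v ↔ u.Perm v := by
  classical
  simp [List.perm_iff_count, funext_iff, parikhWord_apply]

theorem parikhWord_surjective [Finite γ] :
    Function.Surjective (parikhWord : List γ → γ → ℕ) := by
  classical
  intro y
  refine ⟨(Finsupp.toMultiset (Finsupp.equivFunOnFinite.symm y)).toList, funext fun b => ?_⟩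
  rw [parikhWord_apply, ← Multiset.coe_count, Multiset.coe_toList, Finsupp.count_toMultiset]
  rfl

noncomputable def parikhMap [Fintype γ] (f : γ → List σ) : (γ → ℕ) →ₗ[ℕ] σ → ℕ :=
  Fintype.linearCombination ℕ fun b => parikhWord (f b)

theorem parikhWord_flatten_map [Fintype γ] (f : γ → List σ) (w : List γ) :
    parikhWord (w.map f).flatten = parikhMap f (parikhWord w) := by
  classical
  induction w with
  | nil => simp [parikhWord_nil]
  | cons b w ih =>
    rw [List.map_cons, List.flatten_cons, parikhWord_append, ih, ← List.singleton_append,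
      parikhWord_append, map_add, parikhWord_singleton]
    simp [parikhMap]

theorem exists_perm_flatten_map_eq {f : γ → List σ}
    (hf : ∀ b, (f b).length ≤ 1) {u : List σ} {w₀ : List γ} (h : (w₀.map f).flatten.Perm u) :
    ∃ w : List γ, w.Perm w₀ ∧ (w.map f).flatten = u := by
  classical
  induction u generalizing w₀ with
  | nil => exact ⟨w₀, .refl w₀, List.perm_nil.mp h⟩
  | cons a u ih =>
    obtain ⟨b, hb, hab⟩ : ∃ b ∈ w₀, a ∈ f b := by
      simpa using h.symm.subset List.mem_cons_self
    have hfb : f b = [a] := by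
      have := hf b
      rcases hfb : f b with _ | ⟨c, _ | ⟨d, t⟩⟩ <;> simp_all
    have hw₀ : w₀.Perm (b :: w₀.erase b) := List.perm_cons_erase hb
    have hu : ((w₀.erase b).map f).flatten.Perm u := by
      have := (hw₀.map f).flatten.symm.trans h
      rw [List.map_cons, List.flatten_cons, hfb] at this
      exact this.cons_inv
    obtain ⟨w, hw, rfl⟩ := ih hu
    exact ⟨b :: w, (hw.cons b).trans hw₀.symm, by simp [hfb]⟩

theorem image_parikhWord_preimage_flatten_map [Fintype γ] {f : γ → List σ}
    (hf : ∀ b, (f b).length ≤ 1) (L : Set (List σ)) :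
    parikhWord '' {w : List γ | (w.map f).flatten ∈ L} = parikhMap f ⁻¹' (parikhWord '' L) := by
  ext y
  constructor
  · rintro ⟨w, hw, rfl⟩
    exact ⟨_, hw, parikhWord_flatten_map f w⟩
  · rintro ⟨u, hu, hy⟩
    obtain ⟨w₀, rfl⟩ := parikhWord_surjective y
    rw [← parikhWord_flatten_map, parikhWord_eq_parikhWord_iff_perm] at hy
    obtain ⟨w, hw, rfl⟩ := exists_perm_flatten_map_eq hf hy.symm
    exact ⟨w, hu, parikhWord_eq_parikhWord_iff_perm.mpr hw⟩

end Parikh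

theorem semilinear_inv_weak_coding_general {σ γ : Type*} [Fintype γ]
    (f : γ → List σ) (hf : ∀ a : γ, (f a).length ≤ 1)
    (L : Set (List σ)) (hL : IsSemilinearLanguage L) :
    IsSemilinearLanguage { w : List γ | (w.map f).flatten ∈ L } := by
  unfold IsSemilinearLanguage at hL ⊢
  rw [isSemilinearSetNat_iff] at hL ⊢
  rw [image_parikhWord_preimage_flatten_map hf]
  exact hL.preimage (parikhMap f)

/-- the inverse image of a semilinear language under a weak coding
homomorphism (|h(a)| ≤ 1 for every letter a) is semilinear. -/
theorem semilinear_inv_weak_coding {σ γ : Type*} [Fintype σ] [Fintype γ]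
    (f : γ → List σ) (hf : ∀ a : γ, (f a).length ≤ 1)
    (L : Set (List σ)) (hL : IsSemilinearLanguage L) :
    IsSemilinearLanguage { w : List γ | (w.map f).flatten ∈ L } :=
  semilinear_inv_weak_coding_general f hf L hL
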